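/- arXiv:1111.6310 — 2 statements merged into one kernel-verified Lean document; each statement's English description precedes it below -/
import Mathlib

section
/- For every integer l ≥ 0, the ideal I_l of ℤ[q,q^{-1}] (generated by the elements {l−k}_q!{k}_q! for k = 0, …, l) is a principal ideal, generated by the element g_l = ∏_{m=1}^{l} Φ_m(q)^{⌊(l+1)/m⌋ − 1}, where Φ_m denotes the m-th cyclotomic polynomial and ⌊r⌋ is the floor function. (For l = 0 the empty product g_0 = 1 is understood.) -/
/-! Factoring `q^i - 1` into cyclotomic polynomials gives
`{l-k}_q! {k}_q! = ∏_m Φ_m^{⌊(l-k)/m⌋ + ⌊k/m⌋}`, and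
`⌊(l+1)/m⌋ - 1 ≤ ⌊(l-k)/m⌋ + ⌊k/m⌋ ≤ ⌊(l+1)/m⌋`, so `g_l` divides every generator of `I_l`
with a cofactor `u_k = ∏_m Φ_m^{ε_k(m)}`, `ε_k(m) ∈ {0, 1}`, and `ε_k(m) = 0` whenever
`m ∣ k + 1`. It remains to see that the `u_k` generate the unit ideal, i.e. that for every `ζ`
in a field some `u_k(ζ)` is nonzero. The `m` with `Φ_m(ζ) = 0` are `d p^e` (characteristic `p`)
or `d` (characteristic `0`), where `d` is the order of `ζ`; so they form a divisibility chain,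
and taking `k + 1` to be the largest such `m ≤ l`, no factor of `u_k` vanishes at `ζ`. -/

open LaurentPolynomial Finset

/-- `{i}_q = q^i - 1` in `ℤ[q,q⁻¹]`. -/
noncomputable def qInt (i : ℤ) : LaurentPolynomial ℤ := T i - 1

/-- `{i}_{q,n} = {i}_q {i-1}_q ⋯ {i-n+1}_q`. -/
noncomputable def qShift (i : ℤ) (n : ℕ) : LaurentPolynomial ℤ :=
  ∏ r ∈ Finset.range n, qInt (i - r)

/-- `{n}_q! = {n}_{q,n}`. -/
noncomputable def qFact (n : ℕ) : LaurentPolynomial ℤ := qShift n n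

/-- `g_l = ∏_{m=1}^{l} Φ_m(q)^{⌊(l+1)/m⌋ - 1}`. -/
noncomputable def gElt (l : ℕ) : LaurentPolynomial ℤ :=
  ∏ m ∈ Finset.Icc 1 l, (Polynomial.cyclotomic m ℤ).toLaurent ^ ((l + 1) / m - 1)

/-- The ideal `I_l` of `ℤ[q,q⁻¹]` generated by `{l-k}_q! {k}_q!`, `k = 0, …, l`. -/
noncomputable def Iideal (l : ℕ) : Ideal (LaurentPolynomial ℤ) :=
  Ideal.span {x | ∃ k ≤ l, x = qFact (l - k) * qFact k}

open Polynomial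

theorem Nat.add_add_one_div_le_div_add_div_add_one (a b : ℕ) {m : ℕ} (hm : 0 < m) :
    (a + b + 1) / m ≤ a / m + b / m + 1 := by
  rw [← Nat.lt_succ_iff, Nat.div_lt_iff_lt_mul hm]
  have := Nat.lt_div_mul_add (a := a) hm
  have := Nat.lt_div_mul_add (a := b) hm
  nlinarith

theorem Nat.add_add_one_div_of_dvd (a : ℕ) {b m : ℕ} (h : m ∣ b + 1) :
    (a + b + 1) / m = a / m + b / m + 1 := by
  rw [add_assoc, Nat.add_div_of_dvd_left h, Nat.succ_div_of_dvd h, add_assoc]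

theorem Ideal.span_image_mul_left_of_span_eq_top {R : Type*} [CommSemiring R] (g : R)
    {t : Set R} (ht : Ideal.span t = ⊤) : Ideal.span ((g * ·) '' t) = Ideal.span {g} := by
  rw [← Set.singleton_mul, ← Ideal.span_mul_span', ht, Ideal.mul_top]

namespace Polynomial

theorem prod_X_pow_sub_one_eq_prod_cyclotomic_pow (R : Type*) [CommRing R] {n N : ℕ}
    (h : n ≤ N) :
    ∏ i ∈ Icc 1 n, (X ^ i - 1 : R[X]) = ∏ m ∈ Icc 1 N, cyclotomic m R ^ (n / m) := by
  have hIcc : ∀ k, Icc 1 k = Ioc 0 k := fun k => rfl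
  calc ∏ i ∈ Icc 1 n, (X ^ i - 1 : R[X])
      = ∏ i ∈ Ioc 0 n, ∏ m ∈ i.divisors, cyclotomic m R :=
        prod_congr (hIcc n) fun i hi => (prod_cyclotomic_eq_X_pow_sub_one (mem_Ioc.1 hi).1 R).symm
    _ = ∏ m ∈ Ioc 0 n, ∏ _i ∈ (Ioc 0 n).filter (m ∣ ·), cyclotomic m R := by
        refine prod_comm' fun i m => ?_
        simp only [mem_Ioc, Nat.mem_divisors, mem_filter]
        constructor
        · rintro ⟨⟨hi, hin⟩, hmi, -⟩
          exact ⟨⟨⟨hi, hin⟩, hmi⟩, Nat.pos_of_dvd_of_pos hmi hi, (Nat.le_of_dvd hi hmi).trans hin⟩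
        · rintro ⟨⟨⟨hi, hin⟩, hmi⟩, -⟩
          exact ⟨⟨hi, hin⟩, hmi, hi.ne'⟩
    _ = ∏ m ∈ Icc 1 N, cyclotomic m R ^ (n / m) := by
        simp only [prod_const, Nat.Ioc_filter_dvd_card_eq_div, hIcc]
        refine prod_subset (Ioc_subset_Ioc_right h) fun m hm hmn => ?_
        rw [Nat.div_eq_of_lt (by simp_all), pow_zero]

theorem isRoot_cyclotomic_dvd_or_dvd {K : Type*} [CommRing K] [IsDomain K] {ζ : K} {m n : ℕ}
    (hm : (cyclotomic m K).IsRoot ζ) (hn : (cyclotomic n K).IsRoot ζ) : m ∣ n ∨ n ∣ m := by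
  have ne_zero_of_isRoot : ∀ {m}, (cyclotomic m K).IsRoot ζ → m ≠ 0 := by
    rintro m h rfl
    simp at h
  rcases CharP.char_is_prime_or_zero K (ringChar K) with hp | hchar
  · have : Fact (ringChar K).Prime := ⟨hp⟩
    set p := ringChar K
    have : CharP K p := ringChar.charP K
    -- a root of `Φ_m` is a primitive root of unity of order the prime-to-`p` part of `m`
    have ordCompl_eq : ∀ {m}, (cyclotomic m K).IsRoot ζ → ordCompl[p] m = orderOf ζ := by
      intro m h
      have : NeZero ((ordCompl[p] m : ℕ) : K) :=
        NeZero.of_not_dvd K (Nat.not_dvd_ordCompl hp (ne_zero_of_isRoot h))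
      rw [← Nat.ordProj_mul_ordCompl_eq_self m p] at h
      exact (isRoot_cyclotomic_prime_pow_mul_iff_of_charP.1 h).eq_orderOf
    rw [← Nat.ordProj_mul_ordCompl_eq_self m p, ← Nat.ordProj_mul_ordCompl_eq_self n p,
      ordCompl_eq hm, ordCompl_eq hn]
    rcases le_total (m.factorization p) (n.factorization p) with h | h
    · exact .inl (mul_dvd_mul_right (pow_dvd_pow p h) _)
    · exact .inr (mul_dvd_mul_right (pow_dvd_pow p h) _)
  · have : CharP K 0 := hchar ▸ ringChar.charP K
    have : CharZero K := CharP.charP_to_charZero K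
    have eq_orderOf : ∀ {m}, (cyclotomic m K).IsRoot ζ → m = orderOf ζ := fun h =>
      ((isRoot_cyclotomic_iff_charZero (Nat.pos_of_ne_zero (ne_zero_of_isRoot h))).1 h).eq_orderOf
    exact .inl (eq_orderOf hm ▸ eq_orderOf hn ▸ dvd_rfl)

theorem exists_forall_isRoot_cyclotomic_dvd {K : Type*} [CommRing K] [IsDomain K] (ζ : K)
    (l : ℕ) : ∃ k ≤ l, ∀ m ∈ Icc 1 l, (cyclotomic m K).IsRoot ζ → m ∣ k + 1 := by
  classical
  set s := (Icc 1 l).filter fun m => (cyclotomic m K).IsRoot ζ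
  rcases s.eq_empty_or_nonempty with hs | hs
  · refine ⟨0, l.zero_le, fun m hm hroot => ?_⟩
    exact absurd (mem_filter.2 ⟨hm, hroot⟩) (hs ▸ notMem_empty m)
  obtain ⟨hMs, hMroot⟩ := mem_filter.1 (s.max'_mem hs)
  set M := s.max' hs
  obtain ⟨hM1, hMl⟩ := mem_Icc.1 hMs
  refine ⟨M - 1, by omega, fun m hm hroot => ?_⟩
  rw [Nat.sub_add_cancel hM1]
  rcases isRoot_cyclotomic_dvd_or_dvd hroot hMroot with h | h
  · exact h
  · have hmM : m ≤ M := s.le_max' m (mem_filter.2 ⟨hm, hroot⟩)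
    rw [Nat.le_antisymm hmM (Nat.le_of_dvd (mem_Icc.1 hm).1 h)]

/-- The cofactor `({l-k}_q! {k}_q!) / g_l`, as a polynomial. -/
noncomputable def qFactCofactor (R : Type*) [CommRing R] (l k : ℕ) : R[X] :=
  ∏ m ∈ Icc 1 l, cyclotomic m R ^ ((l - k) / m + k / m + 1 - (l + 1) / m)

theorem map_qFactCofactor {R S : Type*} [CommRing R] [CommRing S] (f : R →+* S) (l k : ℕ) :
    (qFactCofactor R l k).map f = qFactCofactor S l k := by
  simp only [qFactCofactor, Polynomial.map_prod, Polynomial.map_pow, map_cyclotomic]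

theorem prod_cyclotomic_pow_mul_qFactCofactor (R : Type*) [CommRing R] {l k : ℕ} (hk : k ≤ l) :
    (∏ m ∈ Icc 1 l, cyclotomic m R ^ ((l + 1) / m - 1)) * qFactCofactor R l k =
      ∏ m ∈ Icc 1 l, cyclotomic m R ^ ((l - k) / m + k / m) := by
  rw [qFactCofactor, ← prod_mul_distrib]
  refine prod_congr rfl fun m hm => ?_
  obtain ⟨hm1, hml⟩ := mem_Icc.1 hm
  have hle := Nat.add_add_one_div_le_div_add_div_add_one (l - k) k hm1
  have hpos : 1 ≤ (l + 1) / m := (Nat.one_le_div_iff hm1).2 (by omega)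
  rw [Nat.sub_add_cancel hk] at hle
  rw [← pow_add]
  congr 1
  omega

theorem exists_eval_qFactCofactor_ne_zero {K : Type*} [CommRing K] [IsDomain K] (ζ : K) (l : ℕ) :
    ∃ k ≤ l, (qFactCofactor K l k).eval ζ ≠ 0 := by
  obtain ⟨k, hkl, hdvd⟩ := exists_forall_isRoot_cyclotomic_dvd ζ l
  refine ⟨k, hkl, ?_⟩
  simp only [qFactCofactor, eval_prod, eval_pow]
  refine prod_ne_zero_iff.2 fun m hm => ?_
  by_cases hroot : (cyclotomic m K).IsRoot ζ
  · have := Nat.add_add_one_div_of_dvd (l - k) (hdvd m hm hroot)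
    rw [Nat.sub_add_cancel hkl] at this
    rw [this, Nat.sub_self, pow_zero]
    exact one_ne_zero
  · exact pow_ne_zero _ hroot

theorem span_qFactCofactor_eq_top (R : Type*) [CommRing R] (l : ℕ) :
    Ideal.span (qFactCofactor R l '' Set.Iic l) = ⊤ := by
  by_contra hne
  obtain ⟨P, hP, hle⟩ := Ideal.exists_le_maximal _ hne
  let π := Ideal.Quotient.mkₐ R P
  obtain ⟨k, hkl, hne⟩ := exists_eval_qFactCofactor_ne_zero (π X) l
  refine hne ?_
  rw [← map_qFactCofactor (algebraMap R (R[X] ⧸ P)), ← eval₂_eq_eval_map, ← aeval_def,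
    aeval_algHom_apply, aeval_X_left_apply]
  exact Ideal.Quotient.eq_zero_iff_mem.2 (hle (Ideal.subset_span ⟨k, hkl, rfl⟩))

end Polynomial

theorem qFact_eq_toLaurent_prod (n : ℕ) :
    qFact n = toLaurent (∏ i ∈ Icc 1 n, (X ^ i - 1 : ℤ[X])) := by
  rw [map_prod, qFact, qShift]
  refine prod_nbij' (fun r => n - r) (fun i => n - i) (fun r hr => ?_) (fun i hi => ?_)
    (fun r hr => ?_) (fun i hi => ?_) (fun r hr => ?_) <;> simp only [mem_range, mem_Icc] at *
  · omega
  · omega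
  · omega
  · omega
  · rw [qInt, map_sub, map_one, toLaurent_X_pow, Nat.cast_sub hr.le]

theorem qFact_eq_toLaurent_prod_cyclotomic_pow {n N : ℕ} (h : n ≤ N) :
    qFact n = toLaurent (∏ m ∈ Icc 1 N, cyclotomic m ℤ ^ (n / m)) := by
  rw [qFact_eq_toLaurent_prod, prod_X_pow_sub_one_eq_prod_cyclotomic_pow ℤ h]

theorem gElt_mul_toLaurent_qFactCofactor {l k : ℕ} (hk : k ≤ l) :
    gElt l * toLaurent (qFactCofactor ℤ l k) = qFact (l - k) * qFact k := by
  rw [qFact_eq_toLaurent_prod_cyclotomic_pow (l.sub_le k),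
    qFact_eq_toLaurent_prod_cyclotomic_pow hk, ← map_mul, ← prod_mul_distrib, gElt]
  simp only [← pow_add, ← map_pow, ← map_prod, ← map_mul,
    prod_cyclotomic_pow_mul_qFactCofactor ℤ hk]

/-- For every `l ≥ 0`, the ideal `I_l` is principal, generated by `g_l`. -/
theorem Iideal_eq_span_gElt (l : ℕ) : Iideal l = Ideal.span {gElt l} := by
  have generators : {x | ∃ k ≤ l, x = qFact (l - k) * qFact k} =
      (gElt l * ·) '' (toLaurent '' (qFactCofactor ℤ l '' Set.Iic l)) := by
    ext x
    simp only [Set.mem_ofPred_eq, Set.image_image, Set.mem_image, Set.mem_Iic]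
    exact exists_congr fun k => and_congr_right fun hk => by
      rw [gElt_mul_toLaurent_qFactCofactor hk, eq_comm]
  rw [Iideal, generators]
  refine Ideal.span_image_mul_left_of_span_eq_top _ ?_
  rw [← Ideal.map_span, span_qFactCofactor_eq_top, Ideal.map_top]
end

section
/- For every integer l ≥ 0, the element g_l = ∏_{m=1}^{l} Φ_m(q)^{⌊(l+1)/m⌋ − 1} lies in the ideal I_l of ℤ[q,q^{-1}] generated by the elements {l−k}_q!{k}_q! for k = 0, …, l; that is, g_l can be written as a ℤ[q,q^{-1}]-linear combination of the products {l−k}_q!{k}_q!. -/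
/-! Induction on `l`. The quotient `g_{l+1} / g_l` is `∏ Φ_m(q)` over the proper divisors `m` of
`l + 2`, so it suffices that this factor carries every generator `{a}_q! {b}_q!` (`a + b = l`) of
`I_l` into `I_{l+1}`. For `d = gcd(a+1, b+1)`, a proper divisor of `a + b + 2`, the factor is a
multiple of `q^d - 1`; since `z ↦ q^z` turns sums into products, Bézout puts `q^d - 1` in the
ideal `(q^{a+1} - 1, q^{b+1} - 1)`, and multiplying by `{a}_q! {b}_q!` lands in
`({a+1}_q! {b}_q!, {a}_q! {b+1}_q!) ⊆ I_{l+1}`. -/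

open LaurentPolynomial Finset

section LaurentPolynomial

variable {R : Type*} [CommRing R]

theorem T_gcd_sub_one_mem_span_pair (a b : ℕ) :
    (T (Nat.gcd a b : ℤ) - 1 : R[T;T⁻¹]) ∈
      Ideal.span {T (a : ℤ) - 1, T (b : ℤ) - 1} := by
  set I : Ideal R[T;T⁻¹] := Ideal.span {T (a : ℤ) - 1, T (b : ℤ) - 1}
  let S : AddSubgroup ℤ :=
    { carrier := {z | T z - 1 ∈ I}
      zero_mem' := by simp
      add_mem' := fun {x y} hx hy => by
        have h : (T (x + y) - 1 : R[T;T⁻¹]) = T x * (T y - 1) + (T x - 1) := by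
          rw [T_add]; ring
        change _ ∈ I
        rw [h]
        exact add_mem (I.mul_mem_left _ hy) hx
      neg_mem' := fun {x} hx => by
        have h : (T (-x) - 1 : R[T;T⁻¹]) = -T (-x) * (T x - 1) := by
          rw [neg_mul, mul_sub, ← T_add, neg_add_cancel, T_zero, mul_one, neg_sub]
        change _ ∈ I
        rw [h]
        exact I.mul_mem_left _ hx }
  have ha : (a : ℤ) ∈ S := Ideal.subset_span (by simp)
  have hb : (b : ℤ) ∈ S := Ideal.subset_span (by simp)
  show (Nat.gcd a b : ℤ) ∈ S
  rw [Nat.gcd_eq_gcd_ab, mul_comm (a : ℤ), mul_comm (b : ℤ)]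
  exact add_mem (S.zsmul_mem ha _) (S.zsmul_mem hb _)

theorem T_sub_one_dvd_prod_cyclotomic_properDivisors {d n : ℕ} (hd : d ∣ n) (hdn : d < n)
    (hd₀ : 0 < d) :
    (T (d : ℤ) - 1 : R[T;T⁻¹]) ∣
      ∏ m ∈ n.properDivisors, (Polynomial.cyclotomic m R).toLaurent := by
  have hX : (Polynomial.X ^ d - 1 : Polynomial R) ∣
      ∏ m ∈ n.properDivisors, Polynomial.cyclotomic m R := by
    rw [← Polynomial.prod_cyclotomic_eq_X_pow_sub_one hd₀]
    refine prod_dvd_prod_of_subset _ _ _ fun e he => ?_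
    have he : e ∣ d := Nat.dvd_of_mem_divisors he
    exact Nat.mem_properDivisors.mpr ⟨he.trans hd, (Nat.le_of_dvd hd₀ he).trans_lt hdn⟩
  simpa using map_dvd Polynomial.toLaurent hX

end LaurentPolynomial

theorem prod_pow_div_sub_one_succ {M : Type*} [CommMonoid M] (f : ℕ → M) (l : ℕ) :
    ∏ m ∈ Icc 1 (l + 1), f m ^ ((l + 2) / m - 1) =
      (∏ m ∈ Icc 1 l, f m ^ ((l + 1) / m - 1)) * ∏ m ∈ (l + 2).properDivisors, f m := by
  have hfactor : ∀ m ∈ Icc 1 (l + 1),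
      f m ^ ((l + 2) / m - 1) = f m ^ ((l + 1) / m - 1) * if m ∣ l + 2 then f m else 1 := by
    intro m hm
    obtain ⟨hm₁, hml⟩ := mem_Icc.mp hm
    have hq : 1 ≤ (l + 1) / m := (Nat.one_le_div_iff hm₁).mpr hml
    rw [Nat.succ_div]
    split_ifs
    · rw [show (l + 1) / m + 1 - 1 = (l + 1) / m - 1 + 1 by omega, pow_succ]
    · rw [add_zero, mul_one]
  rw [prod_congr rfl hfactor, prod_mul_distrib, prod_Icc_succ_top (by omega),
    Nat.div_self (by omega), Nat.sub_self, pow_zero, mul_one, ← prod_filter]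
  -- `n.properDivisors` unfolds to a filter of `Ico 1 n`, and `Icc 1 (l + 1) = Ico 1 (l + 2)`
  rfl

theorem gElt_succ (l : ℕ) :
    gElt (l + 1) =
      gElt l * ∏ m ∈ (l + 2).properDivisors, (Polynomial.cyclotomic m ℤ).toLaurent :=
  prod_pow_div_sub_one_succ _ l

theorem qFact_succ (n : ℕ) : qFact (n + 1) = qFact n * (T ((n + 1 : ℕ) : ℤ) - 1) := by
  rw [qFact, qShift, prod_range_succ', qFact, qShift, qInt]
  congr 1
  exact prod_congr rfl fun k _ => by push_cast; ring_nf

theorem qFact_mul_qFact_mem_Iideal (a b : ℕ) : qFact a * qFact b ∈ Iideal (a + b) :=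
  Ideal.subset_span ⟨b, by omega, by rw [Nat.add_sub_cancel]⟩

theorem T_gcd_sub_one_mul_mem_Iideal (a b : ℕ) :
    (T (Nat.gcd (a + 1) (b + 1) : ℤ) - 1) * (qFact a * qFact b) ∈ Iideal (a + b + 1) := by
  obtain ⟨u, v, huv⟩ :=
    Ideal.mem_span_pair.mp (T_gcd_sub_one_mem_span_pair (R := ℤ) (a + 1) (b + 1))
  have hsucc_left := qFact_mul_qFact_mem_Iideal (a + 1) b
  have hsucc_right := qFact_mul_qFact_mem_Iideal a (b + 1)
  rw [qFact_succ] at hsucc_left hsucc_right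
  rw [show a + 1 + b = a + b + 1 by omega] at hsucc_left
  rw [← huv]
  convert add_mem (Ideal.mul_mem_left _ u hsucc_left) (Ideal.mul_mem_left _ v hsucc_right) using 1
  ring

theorem prod_cyclotomic_mul_mem_Iideal_succ {l : ℕ} {x : LaurentPolynomial ℤ}
    (hx : x ∈ Iideal l) :
    (∏ m ∈ (l + 2).properDivisors, (Polynomial.cyclotomic m ℤ).toLaurent) * x ∈
      Iideal (l + 1) := by
  induction hx using Submodule.span_induction with
  | mem y hy =>
    obtain ⟨k, hk, rfl⟩ := hy
    obtain ⟨a, rfl⟩ : ∃ a, l = a + k := ⟨l - k, by omega⟩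
    rw [Nat.add_sub_cancel]
    set d := Nat.gcd (a + 1) (k + 1)
    have hd : d ∣ a + k + 2 := by
      simpa [show a + 1 + (k + 1) = a + k + 2 by omega] using
        Nat.dvd_add (Nat.gcd_dvd_left (a + 1) (k + 1)) (Nat.gcd_dvd_right (a + 1) (k + 1))
    have hdl : d < a + k + 2 := (Nat.gcd_le_left _ a.succ_pos).trans_lt (by omega)
    obtain ⟨c, hc⟩ := T_sub_one_dvd_prod_cyclotomic_properDivisors (R := ℤ) hd hdl
      (Nat.gcd_pos_of_pos_left _ a.succ_pos)
    rw [hc, mul_right_comm]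
    exact Ideal.mul_mem_right _ _ (T_gcd_sub_one_mul_mem_Iideal a k)
  | zero => simp
  | add y z _ _ hy hz => exact mul_add _ y z ▸ add_mem hy hz
  | smul r y _ hy => exact mul_left_comm r _ y ▸ Ideal.mul_mem_left _ r hy

/-- For every `l ≥ 0`, the element `g_l` lies in the ideal `I_l`. -/
theorem gElt_mem_Iideal (l : ℕ) : gElt l ∈ Iideal l := by
  induction l with
  | zero => simpa [gElt, qFact, qShift] using qFact_mul_qFact_mem_Iideal 0 0
  | succ l ih =>
    rw [gElt_succ, mul_comm]
    exact prod_cyclotomic_mul_mem_Iideal_succ ih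
end
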